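/- Let g : 𝒴 → ℝ^d be any measurable estimator and let ε = g(Y) − X denote the estimation error. Then for every a ∈ ℝ^d and every integer M ≥ 2, E[⟨a, ε⟩²] ≥ ∫_0^∞ (t/2) V_t{ h(t,a,M)/(M−1) } dt, where for t > 0, h(t,a,M) = sup over tuples U = (u_0,…,u_{M−1}) in ℝ^d satisfying ⟨a, u_k⟩ = kt for all k ∈ [0:M−1] of ∫ P_e(x; 𝒫_U(x), U) dμ_U(x). -/

import Mathlib

open MeasureTheory ProbabilityTheory ENNReal

noncomputable section

variable {d : ℕ} {𝒴 : Type*} [MeasurableSpace 𝒴]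

/-- Law of `X - u` when `X ∼ P`. -/
def shiftLaw (P : Measure (Fin d → ℝ)) (u : Fin d → ℝ) : Measure (Fin d → ℝ) :=
  P.map (· - u)

/-- The mixture measure `μ_U = ∑_k P_{X-u_k}`. -/
def mixMeasure (P : Measure (Fin d → ℝ)) {M : ℕ} (U : Fin M → Fin d → ℝ) :
    Measure (Fin d → ℝ) :=
  ∑ k : Fin M, shiftLaw P (U k)

/-- The prior `p_i(x) = dP_{X-u_i}/dμ_U (x)`. -/
def prior (P : Measure (Fin d → ℝ)) {M : ℕ} (U : Fin M → Fin d → ℝ) (i : Fin M)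
    (x : Fin d → ℝ) : ℝ≥0∞ :=
  (shiftLaw P (U i)).rnDeriv (mixMeasure P U) x

/-- Minimum Bayes error probability of the `M`-ary hypothesis test where hypothesis `i`
has prior `p_i(x)` and observation law `κ(·|x+u_i)`. -/
def bayesError (P : Measure (Fin d → ℝ)) (κ : Kernel (Fin d → ℝ) 𝒴) {M : ℕ}
    (U : Fin M → Fin d → ℝ) (x : Fin d → ℝ) : ℝ≥0∞ :=
  ⨅ (φ : 𝒴 → Fin M) (_ : Measurable φ),
    ∑ i : Fin M, prior P U i x * κ (x + U i) {y | φ y ≠ i}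

/-- `h(t,a,M)`: supremum over tuples `U` with `⟨a, u_k⟩ = kt` of `∫ P_e dμ_U`. -/
def hFunA (P : Measure (Fin d → ℝ)) (κ : Kernel (Fin d → ℝ) 𝒴) (M : ℕ) (t : ℝ)
    (a : Fin d → ℝ) : ℝ≥0∞ :=
  ⨆ (U : Fin M → Fin d → ℝ) (_ : ∀ k : Fin M, (∑ j, a j * U k j) = (k : ℝ) * t),
    ∫⁻ x, bayesError P κ U x ∂(mixMeasure P U)

/-!
Under the mixture `μ_U`, hypothesis `i` amounts to observing `(X, Y) ∼ P ⊗ κ` at the point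
`x = X - u_i`. If `⟨a, u_k⟩ = k u`, the rule that decides for the index nearest to
`⟨a, g(y) - x⟩ / u` therefore errs under hypothesis `i` only when `|⟨a, ε⟩| ≥ u / 2`, and it is
never wrong under all `M` hypotheses at once: it is right for `i = M - 1` when `⟨a, ε⟩ ≥ 0` and
for `i = 0` when `⟨a, ε⟩ ≤ 0`. Hence `∫ P_e dμ_U ≤ (M - 1) P(2 |⟨a, ε⟩| ≥ u)`. This bound is
antitone in `u`, so it dominates the valley-filled `h / (M - 1)`, and the layer-cake formula
`E[⟨a, ε⟩²] = ∫_0^∞ (t / 2) P(2 |⟨a, ε⟩| ≥ t) dt` concludes.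
-/

open Finset

def nearestIndex (n : ℕ) (s : ℝ) : Fin (n + 1) := Fin.clamp (round s).toNat n

lemma measurable_nearestIndex (n : ℕ) : Measurable (nearestIndex n) := by
  have : nearestIndex n = (fun k : ℤ => Fin.clamp k.toNat n) ∘ fun s : ℝ => ⌊s + 1 / 2⌋ := by
    funext s
    simp [nearestIndex, round_eq]
  rw [this]
  exact (measurable_of_countable _).comp (measurable_id.add_const _).floor

lemma nearestIndex_natCast_add_of_abs_lt {n : ℕ} (i : Fin (n + 1)) {s : ℝ} (hs : |s| < 1 / 2) :
    nearestIndex n (i + s) = i := by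
  have hs0 : round s = 0 := round_eq_zero_iff.2 ⟨(abs_lt.mp hs).1.le, (abs_lt.mp hs).2⟩
  ext
  simp [nearestIndex, Fin.clamp, round_natCast_add, hs0]
  omega

lemma nearestIndex_natCast_add_of_nonneg (n : ℕ) {s : ℝ} (hs : 0 ≤ s) :
    nearestIndex n (n + s) = Fin.last n := by
  have : (-1 : ℤ) < round s := by
    exact_mod_cast (by linarith [sub_half_lt_round s] : (-1 : ℝ) < round s)
  ext
  simp [nearestIndex, Fin.clamp, round_natCast_add]
  omega

lemma nearestIndex_of_nonpos (n : ℕ) {s : ℝ} (hs : s ≤ 0) : nearestIndex n s = 0 := by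
  have : round s < 1 := by
    exact_mod_cast (by linarith [round_le_add_half s] : (round s : ℝ) < 1)
  ext
  simp [nearestIndex, Fin.clamp]
  omega

lemma card_nearestIndex_natCast_add_ne_le (n : ℕ) (s : ℝ) :
    #{i : Fin (n + 1) | nearestIndex n (i + s) ≠ i} ≤ n := by
  obtain ⟨j, hj⟩ : ∃ j : Fin (n + 1), nearestIndex n (j + s) = j := by
    rcases le_total 0 s with hs | hs
    · exact ⟨Fin.last n, by simpa using nearestIndex_natCast_add_of_nonneg n hs⟩
    · exact ⟨0, by simpa using nearestIndex_of_nonpos n hs⟩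
  have := card_lt_univ_of_notMem (s := {i : Fin (n + 1) | nearestIndex n (i + s) ≠ i}) (x := j)
    (by simp [hj])
  simpa [Nat.lt_succ_iff] using this

open Classical in
lemma sum_measure_le_mul_measure_of_card_le {α ι : Type*} [MeasurableSpace α] (μ : Measure α)
    (s : Finset ι) {E : ι → Set α} {S : Set α} (hE : ∀ i, MeasurableSet (E i))
    (hS : MeasurableSet S) (hES : ∀ i, E i ⊆ S) {n : ℕ}
    (hcard : ∀ x ∈ S, #{i ∈ s | x ∈ E i} ≤ n) :
    ∑ i ∈ s, μ (E i) ≤ n * μ S := by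
  calc ∑ i ∈ s, μ (E i) = ∫⁻ x, ∑ i ∈ s, (E i).indicator 1 x ∂μ := by
        rw [lintegral_finsetSum _ fun i _ => measurable_one.indicator (hE i)]
        simp only [lintegral_indicator_one (hE _)]
    _ ≤ ∫⁻ x, n * S.indicator 1 x ∂μ := lintegral_mono fun x => by
        by_cases hx : x ∈ S
        · simp only [Set.indicator_apply, hx, Pi.one_apply, if_true, mul_one, sum_boole]
          exact_mod_cast hcard x hx
        · simp [hx, Set.indicator_of_notMem (fun h => hx (hES _ h))]
    _ = n * μ S := by
        rw [lintegral_const_mul _ (measurable_one.indicator hS), lintegral_indicator_one hS]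

lemma lintegral_sum_rnDeriv_mul {α ι : Type*} [MeasurableSpace α] [Fintype ι]
    (μ : ι → Measure α) [∀ i, IsFiniteMeasure (μ i)] {f : ι → α → ℝ≥0∞}
    (hf : ∀ i, Measurable (f i)) :
    ∫⁻ x, ∑ i, (μ i).rnDeriv (∑ j, μ j) x * f i x ∂(∑ j, μ j) = ∑ i, ∫⁻ x, f i x ∂(μ i) := by
  rw [lintegral_finsetSum _ (f := fun i x => (μ i).rnDeriv (∑ j, μ j) x * f i x)
    fun i _ => (Measure.measurable_rnDeriv _ _).mul (hf i)]
  refine sum_congr rfl fun i _ => lintegral_rnDeriv_mul ?_ (hf i).aemeasurable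
  exact Measure.absolutelyContinuous_of_le
    (single_le_sum (fun j _ => Measure.zero_le _) (mem_univ i))

lemma lintegral_ofReal_sq_eq_lintegral_meas_le {α : Type*} [MeasurableSpace α] (μ : Measure α)
    {Z : α → ℝ} (hZ : Measurable Z) :
    ∫⁻ x, ENNReal.ofReal (Z x ^ 2) ∂μ
      = ∫⁻ t in Set.Ioi 0, ENNReal.ofReal (t / 2) * μ {x | t ≤ 2 * |Z x|} := by
  have h := lintegral_comp_eq_lintegral_meas_le_mul μ (f := fun x => 2 * |Z x|)
    (g := fun t => t / 2) (ae_of_all _ fun x => by positivity)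
    (hZ.abs.const_mul 2).aemeasurable
    (fun t _ => (continuous_id.div_const 2).intervalIntegrable _ _)
    (ae_restrict_of_forall_mem measurableSet_Ioi fun t (ht : 0 < t) => by positivity)
  simp only [intervalIntegral.integral_div, integral_id] at h
  simp_rw [mul_comm (ENNReal.ofReal _)]
  convert h using 3 with x
  rw [mul_pow, sq_abs]
  ring_nf

lemma Measurable.const_dotProduct {α ι : Type*} [MeasurableSpace α] [Fintype ι]
    {f : α → ι → ℝ} (hf : Measurable f) (a : ι → ℝ) : Measurable fun x => a ⬝ᵥ f x := by
  unfold dotProduct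
  fun_prop

section BayesError

variable (P : Measure (Fin d → ℝ)) [IsFiniteMeasure P] (κ : Kernel (Fin d → ℝ) 𝒴)
  [IsSFiniteKernel κ]

instance isFiniteMeasure_shiftLaw (u : Fin d → ℝ) : IsFiniteMeasure (shiftLaw P u) := by
  unfold shiftLaw
  infer_instance

lemma lintegral_bayesError_le_sum_compProd {M : ℕ} (U : Fin M → Fin d → ℝ)
    {φ : (Fin d → ℝ) → 𝒴 → Fin M} (hφ : Measurable (Function.uncurry φ)) :
    ∫⁻ x, bayesError P κ U x ∂(mixMeasure P U)
      ≤ ∑ i, (P ⊗ₘ κ) {q | φ (q.1 - U i) q.2 ≠ i} := by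
  have hE : ∀ i, MeasurableSet {q : (Fin d → ℝ) × 𝒴 | φ q.1 q.2 ≠ i} := fun i =>
    (hφ (measurableSet_singleton i)).compl
  have herr : ∀ i, Measurable fun x => κ (x + U i) {y | φ x y ≠ i} := fun i => by
    simpa using (κ.comap (· + U i) (measurable_add_const _)).measurable_kernel_prodMk_left (hE i)
  calc ∫⁻ x, bayesError P κ U x ∂(mixMeasure P U)
      ≤ ∫⁻ x, ∑ i, prior P U i x * κ (x + U i) {y | φ x y ≠ i} ∂(mixMeasure P U) :=
        lintegral_mono fun x => iInf₂_le (φ x) (hφ.comp measurable_prodMk_left)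
    _ = ∑ i, ∫⁻ x, κ (x + U i) {y | φ x y ≠ i} ∂(shiftLaw P (U i)) :=
        lintegral_sum_rnDeriv_mul _ herr
    _ = ∑ i, (P ⊗ₘ κ) {q | φ (q.1 - U i) q.2 ≠ i} := by
        refine sum_congr rfl fun i _ => ?_
        have hEi : MeasurableSet {q : (Fin d → ℝ) × 𝒴 | φ (q.1 - U i) q.2 ≠ i} :=
          (measurable_fst.sub_const _).prodMk measurable_snd (hE i)
        rw [shiftLaw, lintegral_map (herr i) (measurable_sub_const _),
          Measure.compProd_apply hEi]
        simp only [sub_add_cancel]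
        rfl

lemma lintegral_bayesError_le_mul_measure {g : 𝒴 → Fin d → ℝ} (hg : Measurable g)
    (a : Fin d → ℝ) {M : ℕ} {u : ℝ} (hu : 0 < u) (U : Fin M → Fin d → ℝ)
    (hU : ∀ k : Fin M, a ⬝ᵥ U k = k * u) :
    ∫⁻ x, bayesError P κ U x ∂(mixMeasure P U)
      ≤ (M - 1 : ℝ≥0∞) * (P ⊗ₘ κ) {q | u ≤ 2 * |a ⬝ᵥ (g q.2 - q.1)|} := by
  rcases M with _ | n
  · simp [mixMeasure]
  set Z : (Fin d → ℝ) × 𝒴 → ℝ := fun q => a ⬝ᵥ (g q.2 - q.1)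
  have hZ : Measurable Z := ((hg.comp measurable_snd).sub measurable_fst).const_dotProduct a
  have hdecide : ∀ (i : Fin (n + 1)) (q : (Fin d → ℝ) × 𝒴),
      a ⬝ᵥ (g q.2 - (q.1 - U i)) / u = i + Z q / u := by
    intro i q
    rw [show g q.2 - (q.1 - U i) = (g q.2 - q.1) + U i by abel, dotProduct_add, hU]
    field_simp
    ring
  calc ∫⁻ x, bayesError P κ U x ∂(mixMeasure P U)
      ≤ ∑ i, (P ⊗ₘ κ) {q | nearestIndex n (a ⬝ᵥ (g q.2 - (q.1 - U i)) / u) ≠ i} :=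
        lintegral_bayesError_le_sum_compProd P κ U
          (φ := fun x y => nearestIndex n (a ⬝ᵥ (g y - x) / u))
          ((measurable_nearestIndex n).comp
            ((((hg.comp measurable_snd).sub measurable_fst).const_dotProduct a).div_const u))
    _ ≤ n * (P ⊗ₘ κ) {q | u ≤ 2 * |Z q|} := by
        simp only [hdecide]
        refine sum_measure_le_mul_measure_of_card_le _ _ (fun i => ?_)
          (measurableSet_le measurable_const (hZ.abs.const_mul 2)) (fun i q hq => ?_)
          (fun q _ => ?_)
        · exact (((measurable_nearestIndex n).comp
            (measurable_const.add (hZ.div_const u))) (measurableSet_singleton i)).compl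
        · by_contra hlt
          refine hq (nearestIndex_natCast_add_of_abs_lt i ?_)
          rw [abs_div, abs_of_pos hu, div_lt_iff₀ hu]
          simp only [Set.mem_ofPred_eq, not_le] at hlt
          linarith
        · convert card_nearestIndex_natCast_add_ne_le n (Z q / u)
    _ = _ := by rw [Nat.cast_succ, ENNReal.add_sub_cancel_right ENNReal.one_ne_top]

lemma hFunA_le_mul_measure {g : 𝒴 → Fin d → ℝ} (hg : Measurable g) (a : Fin d → ℝ) (M : ℕ)
    {u : ℝ} (hu : 0 < u) :
    hFunA P κ M u a ≤ (M - 1 : ℝ≥0∞) * (P ⊗ₘ κ) {q | u ≤ 2 * |a ⬝ᵥ (g q.2 - q.1)|} :=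
  iSup₂_le fun U hU => lintegral_bayesError_le_mul_measure P κ hg a hu U hU

end BayesError

theorem ziv_zakai_bound_estimator_general
    {d : ℕ} {𝒴 : Type*} [MeasurableSpace 𝒴]
    (P : Measure (Fin d → ℝ)) [IsProbabilityMeasure P]
    (κ : Kernel (Fin d → ℝ) 𝒴) [IsMarkovKernel κ]
    (g : 𝒴 → Fin d → ℝ) (hg : Measurable g) (a : Fin d → ℝ) (M : ℕ) :
    (∫⁻ t in Set.Ioi (0 : ℝ), ENNReal.ofReal (t / 2) *
        ⨆ (u : ℝ) (_ : t ≤ u), hFunA P κ M u a / ((M : ℝ≥0∞) - 1))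
      ≤ ∫⁻ p, ENNReal.ofReal ((∑ j, a j * (g p.2 j - p.1 j)) ^ 2) ∂(P.compProd κ) := by
  set Z : (Fin d → ℝ) × 𝒴 → ℝ := fun p => a ⬝ᵥ (g p.2 - p.1)
  have valley_le : ∀ t ∈ Set.Ioi (0 : ℝ),
      ⨆ (u : ℝ) (_ : t ≤ u), hFunA P κ M u a / ((M : ℝ≥0∞) - 1) ≤ (P ⊗ₘ κ) {p | t ≤ 2 * |Z p|} := by
    intro t (ht : 0 < t)
    refine iSup₂_le fun u htu => ENNReal.div_le_of_le_mul ?_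
    calc hFunA P κ M u a ≤ (M - 1 : ℝ≥0∞) * (P ⊗ₘ κ) {p | u ≤ 2 * |Z p|} :=
          hFunA_le_mul_measure P κ hg a M (ht.trans_le htu)
      _ ≤ (P ⊗ₘ κ) {p | t ≤ 2 * |Z p|} * (M - 1 : ℝ≥0∞) := by
          rw [mul_comm]
          gcongr
  calc _ ≤ ∫⁻ t in Set.Ioi 0, ENNReal.ofReal (t / 2) * (P ⊗ₘ κ) {p | t ≤ 2 * |Z p|} :=
        setLIntegral_mono' measurableSet_Ioi fun t ht => mul_le_mul_right (valley_le t ht) _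
    _ = _ := (lintegral_ofReal_sq_eq_lintegral_meas_le _
        (((hg.comp measurable_snd).sub measurable_fst).const_dotProduct a)).symm

/-- **Ziv–Zakai bound for arbitrary estimators (Theorem 5 / Theorem `thm:BZZ_Mary_vec`).**
For any measurable estimator `g : 𝒴 → ℝ^d`, error `ε = g(Y) − X`, any `a ∈ ℝ^d` and any
integer `M ≥ 2`, `E[⟨a, ε⟩²] ≥ ∫_0^∞ (t/2) V_t{ h(t,a,M)/(M−1) } dt`, where the
expectation is over the joint law `P ⊗ₘ κ` of `(X, Y)`. -/
theorem ziv_zakai_bound_estimator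
    {d : ℕ} (hd : 1 ≤ d) {𝒴 : Type*} [MeasurableSpace 𝒴]
    (P : Measure (Fin d → ℝ)) [IsProbabilityMeasure P]
    (κ : Kernel (Fin d → ℝ) 𝒴) [IsMarkovKernel κ]
    (g : 𝒴 → Fin d → ℝ) (hg : Measurable g) (a : Fin d → ℝ) (M : ℕ) (hM : 2 ≤ M) :
    (∫⁻ t in Set.Ioi (0 : ℝ), ENNReal.ofReal (t / 2) *
        ⨆ (u : ℝ) (_ : t ≤ u), hFunA P κ M u a / ((M : ℝ≥0∞) - 1))
      ≤ ∫⁻ p, ENNReal.ofReal ((∑ j, a j * (g p.2 j - p.1 j)) ^ 2) ∂(P.compProd κ) :=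
  ziv_zakai_bound_estimator_general P κ g hg a M
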